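/- Let X and Y be finite nonempty sets, B, A : X × Y → ℝ with B(x,y) > 0 and A(x,y) > 0 for all x, y. Then min_{x ∈ X} max_{y ∈ Y} B(x,y)/A(x,y) ≥ sup_{q ∈ Δ(Y)} min_{x ∈ X} (∑_y q(y)·B(x,y)) / (∑_y q(y)·A(x,y)). -/
import Mathlib


/-- ROE Minimax lemma: min-max of pointwise ratios dominates the sup over mixtures `q`
of the min over designs of the ratio of expectations. -/
theorem roe_minimax {X Y : Type*} [Fintype X] [Nonempty X] [Fintype Y] [Nonempty Y]
    (B A : X × Y → ℝ)
    (hB : ∀ x y, 0 < B (x, y)) (hA : ∀ x y, 0 < A (x, y)) :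
    Finset.univ.inf' Finset.univ_nonempty
      (fun x : X => Finset.univ.sup' Finset.univ_nonempty
        (fun y : Y => B (x, y) / A (x, y))) ≥
    sSup {r : ℝ | ∃ q : Y → ℝ, (∀ y, 0 ≤ q y) ∧ (∑ y, q y = 1) ∧
      r = Finset.univ.inf' Finset.univ_nonempty
        (fun x : X => (∑ y, q y * B (x, y)) / (∑ y, q y * A (x, y)))} := by
  apply Real.sSup_le
  · rintro r ⟨q, hq0, hq1, rfl⟩
    refine Finset.le_inf' _ _ fun x _ => le_trans (Finset.inf'_le _ (Finset.mem_univ x)) ?_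
    set M := Finset.univ.sup' Finset.univ_nonempty (fun y : Y => B (x, y) / A (x, y)) with hM
    have hA0 : (0:ℝ) < ∑ y, q y * A (x, y) := by
      obtain ⟨y0, hy0⟩ : ∃ y, 0 < q y := by
        by_contra h
        push_neg at h
        have : ∀ y, q y = 0 := fun y => le_antisymm (h y) (hq0 y)
        simp [this] at hq1
      have : 0 < q y0 * A (x, y0) := mul_pos hy0 (hA x y0)
      calc (0:ℝ) < q y0 * A (x, y0) := this
        _ ≤ ∑ y, q y * A (x, y) := Finset.single_le_sum
            (fun y _ => mul_nonneg (hq0 y) (hA x y).le) (Finset.mem_univ y0)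
    rw [div_le_iff₀ hA0]
    have hterm : ∀ y, q y * B (x, y) ≤ M * (q y * A (x, y)) := by
      intro y
      have hle : B (x, y) / A (x, y) ≤ M :=
        Finset.le_sup' (fun y : Y => B (x, y) / A (x, y)) (Finset.mem_univ y)
      have : B (x, y) ≤ M * A (x, y) := by
        rw [div_le_iff₀ (hA x y)] at hle; linarith
      calc q y * B (x, y) ≤ q y * (M * A (x, y)) :=
            mul_le_mul_of_nonneg_left this (hq0 y)
        _ = M * (q y * A (x, y)) := by ring
    calc ∑ y, q y * B (x, y) ≤ ∑ y, M * (q y * A (x, y)) :=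
          Finset.sum_le_sum fun y _ => hterm y
      _ = M * ∑ y, q y * A (x, y) := by rw [Finset.mul_sum]
  · apply le_of_lt
    rw [Finset.lt_inf'_iff]
    intro x _
    rw [Finset.lt_sup'_iff]
    exact ⟨Classical.arbitrary Y, Finset.mem_univ _,
      div_pos (hB x _) (hA x _)⟩
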